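/- Let I = I_{d;a_1,…,a_n} ⊆ S be the Veronese type ideal, generated by all monomials x^u with |u| = d and u(i) ≤ a_i, assuming 1 < d < Σ a_i and a_i ≥ 1 for all i. For a subset A ⊆ [n], the monomial prime P_A is an associated prime of S/I if and only if Σ_{i=1}^n a_i ≥ d - 1 + |A| and Σ_{i ∉ A} a_i ≤ d - 1. -/

import Mathlib

/-!
A monomial `x^u` lies in `I = I_{d;a}` iff its capped degree `Σ min(u_i, a_i)` is at least `d`,
and a polynomial lies in `I` iff every monomial of its support does. If `P_A = (I : f)`, then
`x^w f ∉ I` for `w = a` off `A`, so some exponent `u ≥ w` of `x^w f` has capped degree `< d`,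
while `x_i x^w f ∈ I` forces `u + e_i` to have capped degree `≥ d` for `i ∈ A`. Thus `u` is saturated off `A`, unsaturated on `A`, and of capped
degree `d - 1`, which gives both inequalities. Conversely, the inequalities leave room for such
an exponent `v`, and then `(I : x^v) = P_A`.
-/

open MvPolynomial

/-- The monomial prime ideal `P_A = (x_i : i ∈ A)`. -/
noncomputable def PF {K : Type} [Field K] {n : ℕ} (A : Finset (Fin n)) :
    Ideal (MvPolynomial (Fin n) K) :=
  Ideal.span ((fun i => (X i : MvPolynomial (Fin n) K)) '' ↑A)

/-- The ideal of Veronese type `I_{d;a_1,…,a_n}`, generated by all monomials `x^u` with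
`|u| = d` and `u(i) ≤ a_i` for all `i`. -/
noncomputable def veroneseIdeal (K : Type) [Field K] {n : ℕ} (d : ℕ) (a : Fin n → ℕ) :
    Ideal (MvPolynomial (Fin n) K) :=
  Ideal.span ((fun u : Fin n →₀ ℕ => (monomial u (1 : K) : MvPolynomial (Fin n) K)) ''
    {u | ∑ i, u i = d ∧ ∀ i, u i ≤ a i})

section CappedDegree

variable {σ : Type*} [Fintype σ]

def cappedDegree (a : σ → ℕ) (u : σ →₀ ℕ) : ℕ := ∑ i, min (u i) (a i)

lemma exists_finsupp_le_sum_eq (m : σ → ℕ) {k : ℕ} (hk : k ≤ ∑ i, m i) :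
    ∃ s : σ →₀ ℕ, (∀ i, s i ≤ m i) ∧ ∑ i, s i = k := by
  obtain ⟨s, hsm, rfl⟩ := Finsupp.exists_le_degree_eq (Finsupp.equivFunOnFinite.symm m) k
    (by simpa [Finsupp.degree_eq_sum] using hk)
  exact ⟨s, fun i => by simpa using hsm i, (Finsupp.degree_eq_sum s).symm⟩

lemma le_cappedDegree_iff (a : σ → ℕ) (d : ℕ) (u : σ →₀ ℕ) :
    d ≤ cappedDegree a u ↔ ∃ s : σ →₀ ℕ, (∑ i, s i = d ∧ ∀ i, s i ≤ a i) ∧ s ≤ u := by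
  constructor
  · intro h
    obtain ⟨s, hs, rfl⟩ := exists_finsupp_le_sum_eq _ h
    exact ⟨s, ⟨rfl, fun i => (hs i).trans (min_le_right _ _)⟩,
      fun i => (hs i).trans (min_le_left _ _)⟩
  · rintro ⟨s, ⟨rfl, hsa⟩, hsu⟩
    exact Finset.sum_le_sum fun i _ => le_min (hsu i) (hsa i)

lemma cappedDegree_add_single [DecidableEq σ] (a : σ → ℕ) (u : σ →₀ ℕ) (i : σ) :
    cappedDegree a (u + Finsupp.single i 1) = cappedDegree a u + if u i < a i then 1 else 0 := by
  rw [cappedDegree, cappedDegree, ← Fintype.sum_ite_eq' i fun _ => if u i < a i then 1 else 0,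
    ← Finset.sum_add_distrib]
  refine Finset.sum_congr rfl fun k _ => ?_
  obtain rfl | hki := eq_or_ne k i
  · simp only [Finsupp.add_apply, Finsupp.single_eq_same, if_true]
    split_ifs <;> omega
  · simp [hki]

lemma cappedDegree_add_of_forall {a : σ → ℕ} {u v : σ →₀ ℕ} (h : ∀ i, u i = 0 ∨ a i ≤ v i) :
    cappedDegree a (u + v) = cappedDegree a v :=
  Finset.sum_congr rfl fun i _ => by rw [Finsupp.add_apply]; rcases h i with h | h <;> omega

lemma card_add_le_and_sum_compl_le [DecidableEq σ] {a : σ → ℕ} {d : ℕ} (hd : d ≤ ∑ i, a i)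
    {A : Finset σ} {u : σ →₀ ℕ} (hAc : ∀ j ∉ A, a j ≤ u j) (hu : cappedDegree a u < d)
    (hA : ∀ i ∈ A, d ≤ cappedDegree a (u + Finsupp.single i 1)) :
    d - 1 + A.card ≤ ∑ i, a i ∧ ∑ i ∈ Aᶜ, a i ≤ d - 1 := by
  have hsplit := Finset.sum_add_sum_compl A fun i => min (u i) (a i)
  have hcompl : ∑ j ∈ Aᶜ, min (u j) (a j) = ∑ j ∈ Aᶜ, a j :=
    Finset.sum_congr rfl fun j hj => min_eq_right (hAc j (Finset.mem_compl.1 hj))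
  have hcap : ∀ i ∈ A, u i < a i ∧ d = cappedDegree a u + 1 := fun i hi => by
    have := hA i hi
    rw [cappedDegree_add_single] at this
    split_ifs at this with h <;> omega
  rw [cappedDegree] at hu hcap
  refine ⟨?_, by omega⟩
  obtain rfl | ⟨i₀, hi₀⟩ := A.eq_empty_or_nonempty
  · simp only [Finset.card_empty]
    omega
  have hA_lt : ∑ i ∈ A, min (u i) (a i) + A.card ≤ ∑ i ∈ A, a i := by
    rw [Finset.card_eq_sum_ones, ← Finset.sum_add_distrib]
    exact Finset.sum_le_sum fun i hi => by have := (hcap i hi).1; omega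
  have := Finset.sum_add_sum_compl A a
  have := (hcap i₀ hi₀).2
  omega

lemma exists_exponent_of_card_add_le [DecidableEq σ] {a : σ → ℕ} (ha : ∀ i, 1 ≤ a i) {d : ℕ}
    {A : Finset σ}
    (hcard : d - 1 + A.card ≤ ∑ i, a i) (hcompl : ∑ i ∈ Aᶜ, a i ≤ d - 1) :
    ∃ v : σ →₀ ℕ, (∀ j ∉ A, a j ≤ v j) ∧ (∀ i ∈ A, v i < a i) ∧ cappedDegree a v = d - 1 := by
  have hroom : d - 1 - ∑ i ∈ Aᶜ, a i ≤ ∑ i, if i ∈ A then a i - 1 else 0 := by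
    rw [Finset.sum_ite_mem, Finset.univ_inter, Finset.sum_tsub_distrib _ fun i _ => ha i,
      ← Finset.card_eq_sum_ones]
    have := Finset.sum_add_sum_compl A a
    omega
  obtain ⟨s, hs, hs_sum⟩ := exists_finsupp_le_sum_eq _ hroom
  let w : σ →₀ ℕ := Finsupp.equivFunOnFinite.symm fun i => if i ∈ Aᶜ then a i else 0
  have hmin : ∀ i, min ((s + w) i) (a i) = s i + w i := fun i => by
    have := hs i
    by_cases hi : i ∈ A <;> simp [w, hi] at this ⊢ <;> omega
  refine ⟨s + w, fun j hj => by simp [w, hj], fun i hi => ?_, ?_⟩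
  · have hsi := hs i
    have hai := ha i
    simp only [hi, if_true] at hsi
    simp [w, hi]
    omega
  · rw [cappedDegree, Finset.sum_congr rfl fun i _ => hmin i, Finset.sum_add_distrib, hs_sum]
    simp only [w, Finsupp.coe_equivFunOnFinite_symm, Finset.sum_ite_mem, Finset.univ_inter]
    omega

end CappedDegree

lemma mem_associatedPrimes_quotient_iff {R : Type*} [CommRing R] [IsNoetherianRing R]
    {I P : Ideal R} :
    P ∈ associatedPrimes R (R ⧸ I) ↔ P.IsPrime ∧ ∃ f : R, P = I.colon {f} := by
  have hcolon (f : R) :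
      (⊥ : Submodule R (R ⧸ I)).colon {Ideal.Quotient.mk I f} = I.colon {f} := by
    ext r
    rw [Submodule.mem_colon_singleton, Submodule.mem_colon_singleton, Submodule.mem_bot]
    exact Ideal.Quotient.eq_zero_iff_mem
  rw [AssociatedPrimes.mem_iff, isAssociatedPrime_iff, Ideal.Quotient.mk_surjective.exists]
  simp only [hcolon]

section MonomialIdeals

variable {K : Type} [Field K] {n : ℕ}

lemma mem_veroneseIdeal_iff {d : ℕ} {a : Fin n → ℕ} {g : MvPolynomial (Fin n) K} :
    g ∈ veroneseIdeal K d a ↔ ∀ u ∈ g.support, d ≤ cappedDegree a u := by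
  rw [veroneseIdeal, mem_ideal_span_monomial_image]
  exact forall₂_congr fun u _ => (le_cappedDegree_iff a d u).symm

lemma monomial_mem_veroneseIdeal_iff {d : ℕ} {a : Fin n → ℕ} {u : Fin n →₀ ℕ} :
    monomial u (1 : K) ∈ veroneseIdeal K d a ↔ d ≤ cappedDegree a u := by
  classical
  simp [mem_veroneseIdeal_iff, support_monomial]

lemma mem_PF_iff {A : Finset (Fin n)} {g : MvPolynomial (Fin n) K} :
    g ∈ PF A ↔ ∀ u ∈ g.support, ∃ i ∈ A, u i ≠ 0 :=
  mem_ideal_span_X_image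

lemma X_mem_PF {A : Finset (Fin n)} {i : Fin n} (hi : i ∈ A) :
    (X i : MvPolynomial (Fin n) K) ∈ PF A :=
  Ideal.subset_span ⟨i, hi, rfl⟩

lemma PF_isPrime (A : Finset (Fin n)) : (PF (K := K) A).IsPrime := by
  classical
  let π : MvPolynomial (Fin n) K →ₐ[K] MvPolynomial (Fin n) K :=
    aeval fun i => if i ∈ A then 0 else X i
  -- `π` kills the variables in `A` and is the identity modulo `P_A`, so its kernel is `P_A`.
  have hπ : (Ideal.Quotient.mkₐ K (PF A)).comp π = Ideal.Quotient.mkₐ K (PF A) :=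
    algHom_ext fun i => by
      by_cases hi : i ∈ A
      · simp [π, hi, eq_comm (a := (0 : _ ⧸ _)), Ideal.Quotient.eq_zero_iff_mem, X_mem_PF hi]
      · simp [π, hi]
  suffices PF A = RingHom.ker π from this ▸ RingHom.ker_isPrime _
  refine le_antisymm (Ideal.span_le.2 ?_) fun g hg => ?_
  · rintro _ ⟨i, hi, rfl⟩
    simp [π, Finset.mem_coe.1 hi]
  · rw [← Ideal.Quotient.eq_zero_iff_mem, ← Ideal.Quotient.mkₐ_eq_mk K, ← hπ]
    simp [(RingHom.mem_ker).1 hg]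

lemma exists_exponent_of_PF_eq_colon {d : ℕ} {a : Fin n → ℕ} {A : Finset (Fin n)}
    {f : MvPolynomial (Fin n) K} (h : PF A = (veroneseIdeal K d a).colon {f}) :
    ∃ u : Fin n →₀ ℕ, (∀ j ∉ A, a j ≤ u j) ∧ cappedDegree a u < d ∧
      ∀ i ∈ A, d ≤ cappedDegree a (u + Finsupp.single i 1) := by
  classical
  have hmem : ∀ r, r ∈ PF A ↔ r * f ∈ veroneseIdeal K d a := fun r => by
    rw [h, Submodule.mem_colon_singleton, smul_eq_mul]
  let w : Fin n →₀ ℕ := Finsupp.equivFunOnFinite.symm fun j => if j ∈ A then 0 else a j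
  have hw : monomial w (1 : K) ∉ PF A := by
    simp +contextual [mem_PF_iff, support_monomial, w]
  rw [hmem, mem_veroneseIdeal_iff] at hw
  push Not at hw
  obtain ⟨u, hu, hud⟩ := hw
  have hwu : w ≤ u := by
    by_contra hwu
    rw [mem_support_iff, mul_comm, coeff_mul_monomial', if_neg hwu] at hu
    exact hu rfl
  refine ⟨u, fun j hj => by simpa [w, hj] using hwu j, hud, fun i hi => ?_⟩
  have hXi : monomial w 1 * f * X i ∈ veroneseIdeal K d a := by
    rw [mul_assoc, mul_comm f]
    exact Ideal.mul_mem_left _ _ ((hmem _).1 (X_mem_PF hi))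
  exact mem_veroneseIdeal_iff.1 hXi _ (by rw [support_mul_X]; exact Finset.mem_map_of_mem _ hu)

lemma colon_monomial_eq_PF {d : ℕ} {a : Fin n → ℕ} {A : Finset (Fin n)} {v : Fin n →₀ ℕ}
    (hd : 0 < d) (hAc : ∀ j ∉ A, a j ≤ v j) (hA : ∀ i ∈ A, v i < a i)
    (hv : cappedDegree a v = d - 1) :
    (veroneseIdeal K d a).colon {monomial v 1} = PF A := by
  classical
  refine le_antisymm (fun r hr => ?_) (Ideal.span_le.2 ?_)
  · rw [Submodule.mem_colon_singleton, smul_eq_mul] at hr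
    by_contra hrA
    rw [mem_PF_iff] at hrA
    push Not at hrA
    obtain ⟨u, hu, hu0⟩ := hrA
    have hcap := mem_veroneseIdeal_iff.1 hr (u + v)
      (by rw [mem_support_iff, coeff_mul_monomial, mul_one]; exact mem_support_iff.1 hu)
    rw [cappedDegree_add_of_forall fun i => (em (i ∈ A)).imp (hu0 i) (hAc i)] at hcap
    omega
  · rintro _ ⟨i, hi, rfl⟩
    simp only [SetLike.mem_coe, Submodule.mem_colon_singleton, smul_eq_mul]
    rw [← pow_one (X i), ← monomial_single_add, monomial_mem_veroneseIdeal_iff, add_comm, cappedDegree_add_single,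
      if_pos (hA i hi)]
    omega

end MonomialIdeals

/-- For a Veronese type ideal `I = I_{d;a_1,…,a_n}` with `1 < d < Σ aᵢ` and all `aᵢ ≥ 1`:
`P_A ∈ Ass(S/I)` iff `Σ aᵢ ≥ d - 1 + |A|` and `Σ_{i ∉ A} aᵢ ≤ d - 1`. -/
theorem stmt17 {K : Type} [Field K] {n : ℕ} (d : ℕ) (a : Fin n → ℕ)
    (hd : 1 < d) (hlt : d < ∑ i, a i) (hone : ∀ i, 1 ≤ a i)
    (A : Finset (Fin n)) :
    PF (K := K) A ∈ associatedPrimes (MvPolynomial (Fin n) K)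
        (MvPolynomial (Fin n) K ⧸ veroneseIdeal K d a) ↔
      d - 1 + A.card ≤ ∑ i, a i ∧ ∑ i ∈ Aᶜ, a i ≤ d - 1 := by
  rw [mem_associatedPrimes_quotient_iff]
  constructor
  · rintro ⟨-, f, hf⟩
    obtain ⟨u, hAc, hu, hA⟩ := exists_exponent_of_PF_eq_colon hf
    exact card_add_le_and_sum_compl_le hlt.le hAc hu hA
  · rintro ⟨hcard, hcompl⟩
    obtain ⟨v, hAc, hA, hv⟩ := exists_exponent_of_card_add_le hone hcard hcompl
    exact ⟨PF_isPrime A, monomial v 1, (colon_monomial_eq_PF (by omega) hAc hA hv).symm⟩
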